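/- Let u be a C^{1,2}(F̄_T) solution of the nonlocal system (P) with initial–boundary condition (IB). Assume (A1), (A2), (A3) and that φ₀ is continuous and bounded on F̄ (in particular (A4)). Then sup_{F̄_T} |u(t,x)| ≤ e^{λT} max{ sup_{F̄} |φ₀(x)|, √c₁ }, where λ = c₂ + c₃ L_E² + 1. -/

import Mathlib

/-!
Weight the solution by `e^{-λt}` and look at a point `(t₀, x₀)` where `e^{-λt} |u|` is maximal on
`[0,T] × F̄`. If `t₀ = 0` the maximum is controlled by `φ₀`, and if `x₀ ∈ ∂F` it vanishes. At an
interior point with `t₀ > 0`, pairing (P) with `U = u(t₀,x₀)` and using the optimality conditions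
`⟪∂ₜu, U⟫ ≥ λ|U|²`, `(∂ₓu)ᵀU = 0` and `⟪∂²ₓu(ξ,ξ), U⟫ ≤ 0` (so that the diffusion term has a sign
by (A1)) leaves `λ|U|² ≤ c₁ + c₂|U|² + c₃‖ϑ_u‖²`; since `u` is Lipschitz and vanishes on `∂F`,
(A2) gives `‖ϑ_u(t₀,x₀)‖ ≤ L_E |U|`, and the choice of `λ` yields `|U|² ≤ c₁`.
-/

open Set Filter Topology
open scoped RealInnerProductSpace NNReal Matrix

theorem IsLocalMax.second_deriv_nonpos {φ ψ : ℝ → ℝ} {x₀ c : ℝ} (hmax : IsLocalMax φ x₀)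
    (hφ : ∀ᶠ x in 𝓝 x₀, HasDerivAt φ (ψ x) x) (hψ : HasDerivAt ψ c x₀) : c ≤ 0 := by
  -- If `c > 0`, the second derivative test makes `x₀` also a local minimum, so `φ` is locally
  -- constant and `ψ` vanishes near `x₀`.
  by_contra! hc
  have hderiv : deriv φ =ᶠ[𝓝 x₀] ψ := hφ.mono fun x hx => hx.deriv
  have hmin : IsLocalMin φ x₀ := by
    refine isLocalMin_of_deriv_deriv_pos ?_ ?_ hφ.self_of_nhds.continuousAt
    · rwa [hderiv.deriv_eq, hψ.deriv]
    · rw [hderiv.self_of_nhds]; exact hmax.hasDerivAt_eq_zero hφ.self_of_nhds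
  have hconst : φ =ᶠ[𝓝 x₀] fun _ => φ x₀ :=
    (hmax.and hmin).mono fun x hx => le_antisymm hx.1 hx.2
  have hψ0 : ψ =ᶠ[𝓝 x₀] fun _ => 0 := hderiv.symm.trans (by simpa using hconst.deriv)
  exact hc.ne' (by simpa using hψ.unique ((hasDerivAt_const x₀ (0:ℝ)).congr_of_eventuallyEq hψ0))

theorem IsMaxOn.hasDerivWithinAt_nonneg {f : ℝ → ℝ} {a b t₀ D : ℝ} (hmax : IsMaxOn f (Icc a b) t₀)
    (ht₀ : t₀ ∈ Ioc a b) (hf : HasDerivWithinAt f D (Icc a b) t₀) : 0 ≤ D := by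
  have hcone : a - t₀ ∈ posTangentConeAt (Icc a b) t₀ :=
    sub_mem_posTangentConeAt_of_segment_subset <|
      (convex_Icc a b).segment_subset (Ioc_subset_Icc_self ht₀)
        (left_mem_Icc.2 (ht₀.1.le.trans ht₀.2))
  have := hmax.localize.hasFDerivWithinAt_nonpos hf.hasFDerivWithinAt hcone
  simp only [ContinuousLinearMap.toSpanSingleton_apply, smul_eq_mul] at this
  nlinarith [ht₀.1]

theorem Matrix.PosSemidef.sum_mul_nonpos {ι : Type*} [Fintype ι] {A B : Matrix ι ι ℝ}
    (hA : A.PosSemidef) (hB : ∀ x : ι → ℝ, x ⬝ᵥ B *ᵥ x ≤ 0) : ∑ i, ∑ j, A i j * B i j ≤ 0 := by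
  classical
  open scoped MatrixOrder in
  obtain ⟨S, rfl⟩ := CStarAlgebra.nonneg_iff_eq_star_mul_self.mp hA.nonneg
  calc ∑ i, ∑ j, (star S * S) i j * B i j = ∑ k, S k ⬝ᵥ B *ᵥ S k := by
        simp only [Matrix.mul_apply, Matrix.star_apply, star_trivial, dotProduct, Matrix.mulVec,
          Finset.sum_mul, Finset.mul_sum]
        rw [Finset.sum_congr rfl fun a _ => Finset.sum_comm, Finset.sum_comm]
        exact Finset.sum_congr rfl fun k _ => Finset.sum_congr rfl fun a _ =>
          Finset.sum_congr rfl fun b _ => by ring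
    _ ≤ 0 := Finset.sum_nonpos fun k _ => hB (S k)

theorem Matrix.posSemidef_of_sum_mul_nonneg {ι : Type*} [Fintype ι] {A : Matrix ι ι ℝ}
    (hsymm : ∀ i j, A i j = A j i) (hA : ∀ x : ι → ℝ, 0 ≤ ∑ i, ∑ j, A i j * x i * x j) :
    A.PosSemidef := by
  refine .of_dotProduct_mulVec_nonneg (Matrix.IsHermitian.ext fun i j => by simp [hsymm])
    fun x => (hA x).trans_eq ?_
  simp only [star_trivial, dotProduct, Matrix.mulVec, Finset.mul_sum]
  exact Finset.sum_congr rfl fun i _ => Finset.sum_congr rfl fun j _ => by ring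

theorem sum_mul_inner_apply_single_nonpos {ι G : Type*} [Fintype ι] [DecidableEq ι]
    [NormedAddCommGroup G] [InnerProductSpace ℝ G] {A : Matrix ι ι ℝ} (hA : A.PosSemidef)
    {Q : EuclideanSpace ℝ ι →L[ℝ] EuclideanSpace ℝ ι →L[ℝ] G} {U : G}
    (hQ : ∀ ξ, ⟪Q ξ ξ, U⟫ ≤ 0) :
    ∑ i, ∑ j, A i j * ⟪Q (EuclideanSpace.single i 1) (EuclideanSpace.single j 1), U⟫ ≤ 0 := by
  refine hA.sum_mul_nonpos fun x => ?_
  have hx : WithLp.toLp 2 x = ∑ i, x i • EuclideanSpace.single i (1 : ℝ) := by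
    ext i
    simp [Pi.single_apply]
  convert hQ (WithLp.toLp 2 x) using 1
  simp only [dotProduct, Matrix.mulVec, Finset.mul_sum, hx, map_sum, map_smul, sum_apply,
    smul_apply, sum_inner, real_inner_smul_left]
  conv_rhs => rw [Finset.sum_comm]
  exact Finset.sum_congr rfl fun i _ => Finset.sum_congr rfl fun j _ => by ring

section InnerProduct

variable {E G : Type*} [NormedAddCommGroup E] [NormedSpace ℝ E]
  [NormedAddCommGroup G] [InnerProductSpace ℝ G]

theorem mul_norm_sq_le_inner_of_isMaxOn {g : ℝ → G} {g' : G} {lam T t₀ : ℝ} (ht₀ : t₀ ∈ Ioc 0 T)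
    (hg : HasDerivWithinAt g g' (Icc 0 T) t₀)
    (hmax : IsMaxOn (fun t => Real.exp (-lam * t) * ‖g t‖) (Icc 0 T) t₀) :
    lam * ‖g t₀‖ ^ 2 ≤ ⟪g', g t₀⟫ := by
  have hexp : HasDerivAt (fun t => Real.exp (-lam * t) ^ 2)
      (2 * Real.exp (-lam * t₀) * (Real.exp (-lam * t₀) * -lam)) t₀ := by
    simpa using (((hasDerivAt_id t₀).const_mul (-lam)).exp).fun_pow 2
  have hsq : IsMaxOn (fun t => Real.exp (-lam * t) ^ 2 * ‖g t‖ ^ 2) (Icc 0 T) t₀ :=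
    isMaxOn_iff.2 fun t ht => by
      simpa only [mul_pow] using pow_le_pow_left₀ (by positivity) (isMaxOn_iff.1 hmax t ht) 2
  have := hsq.hasDerivWithinAt_nonneg ht₀ (hexp.hasDerivWithinAt.mul hg.norm_sq)
  have hpos : 0 < Real.exp (-lam * t₀) ^ 2 := by positivity
  rw [real_inner_comm]
  nlinarith

theorem IsLocalMax.inner_fderiv_eq_zero {f : E → G} {f' : E →L[ℝ] G} {x₀ : E}
    (hmax : IsLocalMax (fun x => ‖f x‖ ^ 2) x₀) (hf : HasFDerivAt f f' x₀) (ξ : E) :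
    ⟪f' ξ, f x₀⟫ = 0 := by
  simpa [real_inner_comm] using congr($(hmax.hasFDerivAt_eq_zero hf.norm_sq) ξ)

theorem IsLocalMax.inner_hessian_nonpos {f : E → G} {f' : E → E →L[ℝ] G}
    {f'' : E →L[ℝ] E →L[ℝ] G} {x₀ : E} (hmax : IsLocalMax (fun x => ‖f x‖ ^ 2) x₀)
    (hf : ∀ᶠ x in 𝓝 x₀, HasFDerivAt f (f' x) x) (hf' : HasFDerivAt f' f'' x₀) (ξ : E) :
    ⟪f'' ξ ξ, f x₀⟫ ≤ 0 := by
  set γ : ℝ → E := fun s => x₀ + s • ξ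
  have hγ : ∀ s, HasDerivAt γ ξ s := fun s => by
    simpa [γ] using ((hasDerivAt_id s).smul_const ξ).const_add x₀
  have hγ0 : γ 0 = x₀ := by simp [γ]
  have hγx₀ : Tendsto γ (𝓝 0) (𝓝 x₀) := hγ0 ▸ (hγ 0).continuousAt.tendsto
  have hφ : ∀ᶠ s in 𝓝 0, HasDerivAt (fun s => ‖f (γ s)‖ ^ 2) (2 * ⟪f (γ s), f' (γ s) ξ⟫) s :=
    (hγx₀.eventually hf).mono fun s hs => (hs.comp_hasDerivAt s (hγ s)).norm_sq
  have hf0 : HasDerivAt (fun s => f (γ s)) (f' x₀ ξ) 0 :=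
    (hf.self_of_nhds.comp_hasDerivAt_of_eq 0 (hγ 0) hγ0.symm)
  have hf'0 : HasDerivAt (fun s => f' (γ s) ξ) (f'' ξ ξ) 0 := by
    simpa using (hf'.comp_hasDerivAt_of_eq 0 (hγ 0) hγ0.symm).clm_apply (hasDerivAt_const 0 ξ)
  have hmaxγ : IsLocalMax (fun s => ‖f (γ s)‖ ^ 2) 0 :=
    (hγ0.symm ▸ hmax : IsLocalMax (fun x => ‖f x‖ ^ 2) (γ 0)).comp_continuous (hγ 0).continuousAt
  have := hmaxγ.second_deriv_nonpos hφ ((hf0.inner ℝ hf'0).const_mul 2)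
  simp only [hγ0, real_inner_self_eq_norm_sq] at this
  nlinarith [real_inner_comm (f'' ξ ξ) (f x₀), sq_nonneg ‖f' x₀ ξ‖]

end InnerProduct


section Lipschitz

variable {E G : Type*} [NormedAddCommGroup E] [NormedSpace ℝ E] [NormedAddCommGroup G]
  [NormedSpace ℝ G] {F : Set E}

theorem IsOpen.exists_lineMap_mem_frontier (hF : IsOpen F) {p y : E} (hp : p ∈ closure F)
    (hy : y ∉ F) : ∃ s₀ ∈ Icc (0 : ℝ) 1, AffineMap.lineMap p y s₀ ∈ frontier F ∧
      MapsTo (AffineMap.lineMap p y) (Icc 0 s₀) (closure F) := by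
  set ℓ : ℝ → E := ⇑(AffineMap.lineMap (k := ℝ) p y)
  have hℓ : Continuous ℓ := AffineMap.lineMap_continuous (R := ℝ)
  have hS : IsCompact (Icc 0 1 ∩ ℓ ⁻¹' Fᶜ) :=
    isCompact_Icc.inter_right (hF.isClosed_compl.preimage hℓ)
  obtain ⟨s₀, ⟨hs₀, hs₀F⟩, hmin⟩ :=
    hS.exists_isMinOn ⟨1, right_mem_Icc.2 zero_le_one, by simpa [ℓ] using hy⟩ continuousOn_id
  have hbefore : ∀ s ∈ Ico 0 s₀, ℓ s ∈ F := fun s hs => by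
    by_contra h
    exact (isMinOn_iff.1 hmin s ⟨⟨hs.1, hs.2.le.trans hs₀.2⟩, h⟩).not_gt hs.2
  have hs₀cl : ℓ s₀ ∈ closure F := by
    rcases hs₀.1.eq_or_lt with h | h
    · simpa [ℓ, ← h] using hp
    · refine closure_mono (image_subset_iff.2 hbefore) <|
        hℓ.continuousWithinAt.mem_closure_image ?_
      rw [closure_Ico h.ne]
      exact right_mem_Icc.2 h.le
  refine ⟨s₀, hs₀, hF.frontier_eq ▸ ⟨hs₀cl, hs₀F⟩, fun s hs => ?_⟩
  rcases hs.2.lt_or_eq with h | rfl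
  · exact subset_closure (hbefore s ⟨hs.1, h⟩)
  · exact hs₀cl

variable {f : E → G} {f' : E → E →L[ℝ] G} {C : ℝ≥0}

theorem norm_le_mul_dist_of_frontier_eq_zero (hF : IsOpen F)
    (hf : ∀ x ∈ closure F, HasFDerivWithinAt f (f' x) (closure F) x)
    (hC : ∀ x ∈ closure F, ‖f' x‖₊ ≤ C) (h0 : ∀ x ∈ frontier F, f x = 0) {p y : E}
    (hp : p ∈ closure F) (hy : y ∉ F) : ‖f p‖ ≤ C * dist p y := by
  obtain ⟨s₀, hs₀, hfr, hmaps⟩ := hF.exists_lineMap_mem_frontier hp hy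
  have hmvt := norm_image_sub_le_of_norm_deriv_le_segment' (f := f ∘ AffineMap.lineMap p y)
    (fun s hs => (hf _ (hmaps hs)).comp_hasDerivWithinAt s AffineMap.hasDerivWithinAt_lineMap hmaps)
    (fun s hs => ((f' _).le_opNorm _).trans <|
      mul_le_mul_of_nonneg_right (hC _ (hmaps (Ico_subset_Icc_self hs))) (norm_nonneg _))
    s₀ (right_mem_Icc.2 hs₀.1)
  simp only [Function.comp_apply, h0 _ hfr, AffineMap.lineMap_apply_zero, zero_sub, norm_neg,
    sub_zero] at hmvt
  calc ‖f p‖ ≤ C * ‖y - p‖ * s₀ := hmvt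
    _ ≤ C * ‖y - p‖ * 1 := by gcongr; exact hs₀.2
    _ = C * dist p y := by rw [mul_one, dist_comm, dist_eq_norm]

theorem lipschitzOnWith_closure_of_frontier_eq_zero (hF : IsOpen F)
    (hf : ∀ x ∈ closure F, HasFDerivWithinAt f (f' x) (closure F) x)
    (hC : ∀ x ∈ closure F, ‖f' x‖₊ ≤ C) (h0 : ∀ x ∈ frontier F, f x = 0) :
    LipschitzOnWith C f (closure F) := by
  refine LipschitzOnWith.of_dist_le_mul fun p hp q hq => ?_
  by_cases hseg : segment ℝ q p ⊆ closure F
  · exact (convex_segment q p).lipschitzOnWith_of_nnnorm_hasFDerivWithin_le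
      (fun x hx => (hf x (hseg hx)).mono hseg) (fun x hx => hC x (hseg hx)) |>.dist_le_mul
      p (right_mem_segment ℝ q p) q (left_mem_segment ℝ q p)
  obtain ⟨z, hz, hzF⟩ := not_subset.1 hseg
  have hzF' : z ∉ F := fun h => hzF (subset_closure h)
  calc dist (f p) (f q) ≤ ‖f p‖ + ‖f q‖ := dist_le_norm_add_norm _ _
    _ ≤ C * dist p z + C * dist q z :=
        add_le_add (norm_le_mul_dist_of_frontier_eq_zero hF hf hC h0 hp hzF')
          (norm_le_mul_dist_of_frontier_eq_zero hF hf hC h0 hq hzF')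
    _ = C * dist p q := by
        rw [← mul_add, dist_comm q z, dist_add_dist_of_mem_segment (segment_symm ℝ q p ▸ hz)]

end Lipschitz

theorem LipschitzOnWith.uncurry_prod {α β γ : Type*} [PseudoEMetricSpace α]
    [PseudoEMetricSpace β] [PseudoEMetricSpace γ] {f : α → β → γ} {s : Set α} {t : Set β}
    {Kα Kβ : ℝ≥0} (hα : ∀ b ∈ t, LipschitzOnWith Kα (f · b) s)
    (hβ : ∀ a ∈ s, LipschitzOnWith Kβ (f a) t) :
    LipschitzOnWith (Kα + Kβ) (Function.uncurry f) (s ×ˢ t) := by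
  rintro ⟨a₁, b₁⟩ ⟨ha₁, hb₁⟩ ⟨a₂, b₂⟩ ⟨ha₂, hb₂⟩
  simp only [Function.uncurry, ENNReal.coe_add, add_mul]
  refine (edist_triangle _ (f a₂ b₁) _).trans (add_le_add ?_ ?_)
  · exact (hα b₁ hb₁ ha₁ ha₂).trans (mul_right_mono (le_max_left _ _))
  · exact (hβ a₂ ha₂ hb₁ hb₂).trans (mul_right_mono (le_max_right _ _))

theorem IsMaxOn.csSup_image_eq {α β : Type*} [ConditionallyCompleteLattice α] {f : β → α}
    {s : Set β} {a : β} (hmax : IsMaxOn f s a) (ha : a ∈ s) : sSup (f '' s) = f a :=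
  IsGreatest.csSup_eq ⟨mem_image_of_mem f ha, forall_mem_image.2 fun _ hx => hmax hx⟩

theorem norm_le_exp_mul_of_exp_neg_mul_norm_le {X G : Type*} [NormedAddCommGroup G]
    {u : ℝ → X → G} {s : Set X} {lam T K : ℝ} (hlam : 0 ≤ lam)
    (h : ∀ t ∈ Icc 0 T, ∀ x ∈ s, Real.exp (-lam * t) * ‖u t x‖ ≤ K) :
    ∀ t ∈ Icc 0 T, ∀ x ∈ s, ‖u t x‖ ≤ Real.exp (lam * T) * K := by
  intro t ht x hx
  calc ‖u t x‖ = Real.exp (lam * t) * (Real.exp (-lam * t) * ‖u t x‖) := by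
        rw [← mul_assoc, ← Real.exp_add]; simp
    _ ≤ Real.exp (lam * T) * K :=
        mul_le_mul (Real.exp_le_exp.2 (mul_le_mul_of_nonneg_left ht.2 hlam)) (h t ht x hx)
          (by positivity) (Real.exp_pos _).le

theorem exists_lipschitzOnWith_uncurry {E G : Type*} [NormedAddCommGroup E] [NormedSpace ℝ E]
    [NormedAddCommGroup G] [NormedSpace ℝ G] {F : Set E} (hF : IsOpen F)
    (hFc : IsCompact (closure F)) {T : ℝ} {u ut : ℝ → E → G} {ux : ℝ → E → E →L[ℝ] G}
    (hut : ∀ t ∈ Icc (0:ℝ) T, ∀ x ∈ closure F,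
      HasDerivWithinAt (fun s => u s x) (ut t x) (Icc (0:ℝ) T) t)
    (hux : ∀ t ∈ Icc (0:ℝ) T, ∀ x ∈ closure F, HasFDerivWithinAt (u t) (ux t x) (closure F) x)
    (hutc : ContinuousOn (Function.uncurry ut) (Icc (0:ℝ) T ×ˢ closure F))
    (huxc : ContinuousOn (Function.uncurry ux) (Icc (0:ℝ) T ×ˢ closure F))
    (hbdry : ∀ t ∈ Icc (0:ℝ) T, ∀ x ∈ frontier F, u t x = 0) :
    ∃ K : ℝ≥0, LipschitzOnWith K (Function.uncurry u) (Icc (0:ℝ) T ×ˢ closure F) := by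
  have hS : IsCompact (Icc (0:ℝ) T ×ˢ closure F) := isCompact_Icc.prod hFc
  obtain ⟨Ct, hCt⟩ := (hS.image_of_continuousOn hutc.nnnorm).bddAbove
  obtain ⟨Cx, hCx⟩ := (hS.image_of_continuousOn huxc.nnnorm).bddAbove
  refine ⟨Ct + Cx, LipschitzOnWith.uncurry_prod (fun x hx => ?_) (fun t ht => ?_)⟩
  · exact (convex_Icc 0 T).lipschitzOnWith_of_nnnorm_hasDerivWithin_le
      (fun t ht => hut t ht x hx) (fun t ht => hCt ⟨(t, x), ⟨ht, hx⟩, rfl⟩)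
  · exact lipschitzOnWith_closure_of_frontier_eq_zero hF (hux t ht)
      (fun x hx => hCx ⟨(t, x), ⟨ht, hx⟩, rfl⟩) (hbdry t ht)

theorem sq_norm_le_of_isMaxOn_of_mem_open {ι G W : Type*} [Fintype ι] [DecidableEq ι]
    [NormedAddCommGroup G] [InnerProductSpace ℝ G] [CompleteSpace G] [NormedAddCommGroup W]
    {F : Set (EuclideanSpace ℝ ι)} (hF : IsOpen F) {T t₀ lam c₁ c₂ c₃ L : ℝ}
    {x₀ : EuclideanSpace ℝ ι} (ht₀ : t₀ ∈ Ioc 0 T) (hx₀ : x₀ ∈ F)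
    {u : ℝ → EuclideanSpace ℝ ι → G} {ut : G} {ux : EuclideanSpace ℝ ι → EuclideanSpace ℝ ι →L[ℝ] G}
    {uxx : EuclideanSpace ℝ ι →L[ℝ] EuclideanSpace ℝ ι →L[ℝ] G}
    (hmax : IsMaxOn (fun p : ℝ × EuclideanSpace ℝ ι => Real.exp (-lam * p.1) * ‖u p.1 p.2‖)
      (Icc 0 T ×ˢ closure F) (t₀, x₀))
    (hut : HasDerivWithinAt (fun t => u t x₀) ut (Icc 0 T) t₀)
    (hux : ∀ x ∈ F, HasFDerivAt (u t₀) (ux x) x) (huxx : HasFDerivAt ux uxx x₀)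
    {A : ι → ι → ℝ} (hA : (Matrix.of A).PosSemidef) {b : ι → ℝ} {a₀ : G} {w : W}
    {ζ : EuclideanSpace ℝ ι → ℝ} (hζ : ζ 0 = 0)
    (hpde : -(∑ i, ∑ j, A i j •
          uxx (EuclideanSpace.single i (1:ℝ)) (EuclideanSpace.single j (1:ℝ))) +
        (∑ i, b i • ux x₀ (EuclideanSpace.single i (1:ℝ))) + a₀ + ut = 0)
    (ha₀ : ⟪a₀, u t₀ x₀⟫ ≥ -c₁ - c₂ * ‖u t₀ x₀‖ ^ 2 - c₃ * ‖w‖ ^ 2 -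
      ζ (ContinuousLinearMap.adjoint (ux x₀) (u t₀ x₀)))
    (hw : ‖w‖ ≤ L * ‖u t₀ x₀‖) (hc₃ : 0 ≤ c₃) (hlam : c₂ + c₃ * L ^ 2 + 1 ≤ lam) :
    ‖u t₀ x₀‖ ^ 2 ≤ c₁ := by
  set U := u t₀ x₀
  have hloc : IsLocalMax (fun x => ‖u t₀ x‖ ^ 2) x₀ :=
    mem_of_superset (hF.mem_nhds hx₀) fun x hx => pow_le_pow_left₀ (norm_nonneg _)
      (le_of_mul_le_mul_left (isMaxOn_iff.1 hmax (t₀, x) ⟨Ioc_subset_Icc_self ht₀,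
        subset_closure hx⟩) (Real.exp_pos _)) 2
  have hgrad : ∀ ξ, ⟪ux x₀ ξ, U⟫ = 0 := hloc.inner_fderiv_eq_zero (hux x₀ hx₀)
  have hdiff : ∑ i, ∑ j, A i j *
      ⟪uxx (EuclideanSpace.single i 1) (EuclideanSpace.single j 1), U⟫ ≤ 0 :=
    sum_mul_inner_apply_single_nonpos hA
      (hloc.inner_hessian_nonpos (eventually_of_mem (hF.mem_nhds hx₀) hux) huxx)
  have htime : lam * ‖U‖ ^ 2 ≤ ⟪ut, U⟫ := mul_norm_sq_le_inner_of_isMaxOn ht₀ hut <|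
    isMaxOn_iff.2 fun t ht => isMaxOn_iff.1 hmax (t, x₀) ⟨ht, subset_closure hx₀⟩
  have hadj : ContinuousLinearMap.adjoint (ux x₀) U = 0 := ext_inner_right ℝ fun ξ => by
    rw [ContinuousLinearMap.adjoint_inner_left, real_inner_comm, hgrad, inner_zero_left]
  have hpairing : ⟪ut, U⟫ = ∑ i, ∑ j, A i j *
      ⟪uxx (EuclideanSpace.single i 1) (EuclideanSpace.single j 1), U⟫ - ⟪a₀, U⟫ := by
    have := congrArg (⟪·, U⟫) hpde
    simp only [inner_add_left, inner_neg_left, sum_inner, real_inner_smul_left, hgrad,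
      mul_zero, Finset.sum_const_zero, inner_zero_left] at this
    linarith
  rw [hadj, hζ] at ha₀
  have hw2 : ‖w‖ ^ 2 ≤ L ^ 2 * ‖U‖ ^ 2 := by
    rw [← mul_pow]; exact pow_le_pow_left₀ (norm_nonneg _) hw 2
  nlinarith [mul_le_mul_of_nonneg_left hw2 hc₃, mul_le_mul_of_nonneg_right hlam (sq_nonneg ‖U‖)]

theorem stmt_2_general (n m : ℕ) (T : ℝ) (hT : 0 < T)
    (F : Set (EuclideanSpace ℝ (Fin n))) (hFopen : IsOpen F)
    (hFbdd : Bornology.IsBounded F) (hFne : F.Nonempty)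
    (E : Type*) [NormedAddCommGroup E] [NormedSpace ℝ E]
    -- the coefficients of system (P)
    (aij : Fin n → Fin n → ℝ → EuclideanSpace ℝ (Fin n) → EuclideanSpace ℝ (Fin m) → ℝ)
    (ai : Fin n → ℝ → EuclideanSpace ℝ (Fin n) → EuclideanSpace ℝ (Fin m) →
      (EuclideanSpace ℝ (Fin n) →L[ℝ] EuclideanSpace ℝ (Fin m)) → E → ℝ)
    (a : ℝ → EuclideanSpace ℝ (Fin n) → EuclideanSpace ℝ (Fin m) →
      (EuclideanSpace ℝ (Fin n) →L[ℝ] EuclideanSpace ℝ (Fin m)) → E →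
      EuclideanSpace ℝ (Fin m))
    (hsymm : ∀ i j t x v, aij i j t x v = aij j i t x v)
    -- the nonlocal assignment u ↦ ϑ_u
    (ϑ : (ℝ → EuclideanSpace ℝ (Fin n) → EuclideanSpace ℝ (Fin m)) →
      ℝ → EuclideanSpace ℝ (Fin n) → E)
    (φ₀ : EuclideanSpace ℝ (Fin n) → EuclideanSpace ℝ (Fin m))
    -- (A1): uniform parabolicity
    (μ μhat : ℝ → ℝ)
    (hμhatpos : ∀ s : ℝ, 0 ≤ s → 0 < μhat s)
    (hA1 : ∀ t ∈ Icc (0:ℝ) T, ∀ x ∈ closure F, ∀ v : EuclideanSpace ℝ (Fin m),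
      ∀ ξ : EuclideanSpace ℝ (Fin n),
      μhat ‖v‖ * ‖ξ‖ ^ 2 ≤ ∑ i, ∑ j, aij i j t x v * ξ i * ξ j ∧
      ∑ i, ∑ j, aij i j t x v * ξ i * ξ j ≤ μ ‖v‖ * ‖ξ‖ ^ 2)
    -- (A2): the bound on ϑ, for every Lipschitz v vanishing on ∂F
    (L_E : ℝ)
    (hA2 : ∀ v : ℝ → EuclideanSpace ℝ (Fin n) → EuclideanSpace ℝ (Fin m),
      (∃ K : NNReal, LipschitzOnWith K (Function.uncurry v) (Icc (0:ℝ) T ×ˢ closure F)) →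
      (∀ t ∈ Icc (0:ℝ) T, ∀ x ∈ frontier F, v t x = 0) →
      ∀ lam : ℝ, 0 ≤ lam → ∀ t ∈ Icc (0:ℝ) T, ∀ x ∈ closure F,
        Real.exp (-lam * t) * ‖ϑ v t x‖ ≤
          L_E * sSup ((fun p : ℝ × EuclideanSpace ℝ (Fin n) =>
            Real.exp (-lam * p.1) * ‖v p.1 p.2‖) '' (Icc (0:ℝ) T ×ˢ closure F)))
    -- (A3)
    (c₁ c₂ c₃ : ℝ) (hc₂ : 0 ≤ c₂) (hc₃ : 0 ≤ c₃)
    (ζ : ℝ → EuclideanSpace ℝ (Fin n) → EuclideanSpace ℝ (Fin m) →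
      (EuclideanSpace ℝ (Fin n) →L[ℝ] EuclideanSpace ℝ (Fin m)) → E →
      EuclideanSpace ℝ (Fin n) → ℝ)
    (hζzero : ∀ t x v p w, ζ t x v p w 0 = 0)
    (hA3 : ∀ t ∈ Icc (0:ℝ) T, ∀ x ∈ closure F,
      ∀ (v : EuclideanSpace ℝ (Fin m))
        (p : EuclideanSpace ℝ (Fin n) →L[ℝ] EuclideanSpace ℝ (Fin m)) (w : E),
      ⟪a t x v p w, v⟫ ≥
        -c₁ - c₂ * ‖v‖ ^ 2 - c₃ * ‖w‖ ^ 2 -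
          ζ t x v p w (ContinuousLinearMap.adjoint p v))
    -- (A4): φ₀ ∈ C^{2+β}(F̄)
    (hφ₀c : ContinuousOn φ₀ (closure F))
    -- the C^{1,2}(F̄_T) solution u, with its derivatives ut, ux, uxx
    (u ut : ℝ → EuclideanSpace ℝ (Fin n) → EuclideanSpace ℝ (Fin m))
    (ux : ℝ → EuclideanSpace ℝ (Fin n) →
      (EuclideanSpace ℝ (Fin n) →L[ℝ] EuclideanSpace ℝ (Fin m)))
    (uxx : ℝ → EuclideanSpace ℝ (Fin n) →
      (EuclideanSpace ℝ (Fin n) →L[ℝ]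
        EuclideanSpace ℝ (Fin n) →L[ℝ] EuclideanSpace ℝ (Fin m)))
    (hut : ∀ t ∈ Icc (0:ℝ) T, ∀ x ∈ closure F,
      HasDerivWithinAt (fun s => u s x) (ut t x) (Icc (0:ℝ) T) t)
    (hux : ∀ t ∈ Icc (0:ℝ) T, ∀ x ∈ closure F,
      HasFDerivWithinAt (u t) (ux t x) (closure F) x)
    (huxx : ∀ t ∈ Icc (0:ℝ) T, ∀ x ∈ closure F,
      HasFDerivWithinAt (ux t) (uxx t x) (closure F) x)
    (hucont : ContinuousOn (Function.uncurry u) (Icc (0:ℝ) T ×ˢ closure F))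
    (hutcont : ContinuousOn (Function.uncurry ut) (Icc (0:ℝ) T ×ˢ closure F))
    (huxcont : ContinuousOn (Function.uncurry ux) (Icc (0:ℝ) T ×ˢ closure F))
    -- u solves (P) pointwise on F̄_T
    (hPDE : ∀ t ∈ Icc (0:ℝ) T, ∀ x ∈ closure F,
      -(∑ i, ∑ j, aij i j t x (u t x) •
          uxx t x (EuclideanSpace.single i (1:ℝ)) (EuclideanSpace.single j (1:ℝ))) +
        (∑ i, ai i t x (u t x) (ux t x) (ϑ u t x) •
          ux t x (EuclideanSpace.single i (1:ℝ))) +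
        a t x (u t x) (ux t x) (ϑ u t x) + ut t x = 0)
    -- (IB)
    (hinit : ∀ x ∈ closure F, u 0 x = φ₀ x)
    (hbdry : ∀ t ∈ Icc (0:ℝ) T, ∀ x ∈ frontier F, u t x = 0) :
    ∀ t ∈ Icc (0:ℝ) T, ∀ x ∈ closure F,
      ‖u t x‖ ≤ Real.exp ((c₂ + c₃ * L_E ^ 2 + 1) * T) *
        max (sSup ((fun y => ‖φ₀ y‖) '' closure F)) (Real.sqrt c₁) := by
  set lam := c₂ + c₃ * L_E ^ 2 + 1
  have hlam : 0 ≤ lam := by positivity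
  have hFc : IsCompact (closure F) := hFbdd.isCompact_closure
  have hnhds : ∀ x ∈ F, closure F ∈ 𝓝 x := fun x hx =>
    mem_of_superset (hFopen.mem_nhds hx) subset_closure
  obtain ⟨z, hz⟩ := hFne
  obtain ⟨⟨t₀, x₀⟩, hp₀, hmax⟩ : ∃ p ∈ Icc (0:ℝ) T ×ˢ closure F,
      IsMaxOn (fun p => Real.exp (-lam * p.1) * ‖u p.1 p.2‖) (Icc (0:ℝ) T ×ˢ closure F) p :=
    (isCompact_Icc.prod hFc).exists_isMaxOn ⟨(0, z), ⟨le_rfl, hT.le⟩, subset_closure hz⟩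
      ((by fun_prop : Continuous fun p : ℝ × _ => Real.exp (-lam * p.1)).continuousOn.mul
        hucont.norm)
  obtain ⟨ht₀, hx₀⟩ := hp₀
  refine norm_le_exp_mul_of_exp_neg_mul_norm_le hlam fun t ht x hx =>
    (hmax (mk_mem_prod ht hx)).trans ?_
  rcases ht₀.1.eq_or_lt with rfl | ht₀pos
  · simpa [hinit x₀ hx₀] using le_max_of_le_left <|
      le_csSup (hFc.image_of_continuousOn hφ₀c.norm).bddAbove (mem_image_of_mem _ hx₀)
  by_cases hx₀F : x₀ ∈ F
  swap
  · simp [hbdry t₀ ht₀ x₀ (hFopen.frontier_eq ▸ ⟨hx₀, hx₀F⟩)]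
  have hϑ : ‖ϑ u t₀ x₀‖ ≤ L_E * ‖u t₀ x₀‖ := by
    obtain ⟨K, hK⟩ := exists_lipschitzOnWith_uncurry hFopen hFc hut hux hutcont huxcont hbdry
    have := hA2 u ⟨K, hK⟩ hbdry lam hlam t₀ ht₀ x₀ hx₀
    rw [hmax.csSup_image_eq (mk_mem_prod ht₀ hx₀), mul_left_comm] at this
    exact le_of_mul_le_mul_left this (Real.exp_pos _)
  have hA : (Matrix.of fun i j => aij i j t₀ x₀ (u t₀ x₀)).PosSemidef :=
    Matrix.posSemidef_of_sum_mul_nonneg (fun i j => hsymm i j t₀ x₀ _) fun ξ =>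
      (mul_nonneg (hμhatpos _ (norm_nonneg _)).le (sq_nonneg _)).trans
        (hA1 t₀ ht₀ x₀ hx₀ _ (WithLp.toLp 2 ξ)).1
  have hU := sq_norm_le_of_isMaxOn_of_mem_open hFopen ⟨ht₀pos, ht₀.2⟩ hx₀F hmax
    (hut t₀ ht₀ x₀ hx₀) (fun x hx => (hux t₀ ht₀ x (subset_closure hx)).hasFDerivAt (hnhds x hx))
    ((huxx t₀ ht₀ x₀ hx₀).hasFDerivAt (hnhds x₀ hx₀F)) hA (hζzero _ _ _ _ _)
    (hPDE t₀ ht₀ x₀ hx₀) (hA3 t₀ ht₀ x₀ hx₀ _ _ _) hϑ hc₃ le_rfl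
  calc Real.exp (-lam * t₀) * ‖u t₀ x₀‖ ≤ ‖u t₀ x₀‖ :=
        mul_le_of_le_one_left (norm_nonneg _) (Real.exp_le_one_iff.2 (by nlinarith))
    _ ≤ Real.sqrt c₁ := Real.le_sqrt_of_sq_le hU
    _ ≤ _ := le_max_right _ _

/-- Theorem 2.3 of the paper: maximum principle for the nonlocal
initial–boundary value problem (P)+(IB).  Under assumptions (A1)–(A4), any
`C^{1,2}(F̄_T)` solution `u` of the nonlocal quasilinear parabolic system (P) with
initial–boundary condition (IB) satisfies
`sup_{F̄_T} |u| ≤ e^{λT} max{ sup_{F̄} |φ₀|, √c₁ }` where `λ = c₂ + c₃ L_E² + 1`. -/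
theorem stmt_2 (n m : ℕ) (T : ℝ) (hT : 0 < T)
    (F : Set (EuclideanSpace ℝ (Fin n))) (hFopen : IsOpen F)
    (hFbdd : Bornology.IsBounded F) (hFne : F.Nonempty)
    (E : Type*) [NormedAddCommGroup E] [NormedSpace ℝ E]
    -- the coefficients of system (P)
    (aij : Fin n → Fin n → ℝ → EuclideanSpace ℝ (Fin n) → EuclideanSpace ℝ (Fin m) → ℝ)
    (ai : Fin n → ℝ → EuclideanSpace ℝ (Fin n) → EuclideanSpace ℝ (Fin m) →
      (EuclideanSpace ℝ (Fin n) →L[ℝ] EuclideanSpace ℝ (Fin m)) → E → ℝ)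
    (a : ℝ → EuclideanSpace ℝ (Fin n) → EuclideanSpace ℝ (Fin m) →
      (EuclideanSpace ℝ (Fin n) →L[ℝ] EuclideanSpace ℝ (Fin m)) → E →
      EuclideanSpace ℝ (Fin m))
    (hsymm : ∀ i j t x v, aij i j t x v = aij j i t x v)
    -- the nonlocal assignment u ↦ ϑ_u
    (ϑ : (ℝ → EuclideanSpace ℝ (Fin n) → EuclideanSpace ℝ (Fin m)) →
      ℝ → EuclideanSpace ℝ (Fin n) → E)
    (φ₀ : EuclideanSpace ℝ (Fin n) → EuclideanSpace ℝ (Fin m))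
    -- (A1): uniform parabolicity
    (μ μhat : ℝ → ℝ)
    (hμcont : Continuous μ) (hμhatcont : Continuous μhat)
    (hμpos : ∀ s : ℝ, 0 ≤ s → 0 < μ s) (hμhatpos : ∀ s : ℝ, 0 ≤ s → 0 < μhat s)
    (hμmono : ∀ s r : ℝ, 0 ≤ s → s ≤ r → μ s ≤ μ r)
    (hμhatmono : ∀ s r : ℝ, 0 ≤ s → s ≤ r → μhat r ≤ μhat s)
    (hA1 : ∀ t ∈ Icc (0:ℝ) T, ∀ x ∈ closure F, ∀ v : EuclideanSpace ℝ (Fin m),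
      ∀ ξ : EuclideanSpace ℝ (Fin n),
      μhat ‖v‖ * ‖ξ‖ ^ 2 ≤ ∑ i, ∑ j, aij i j t x v * ξ i * ξ j ∧
      ∑ i, ∑ j, aij i j t x v * ξ i * ξ j ≤ μ ‖v‖ * ‖ξ‖ ^ 2)
    -- (A2): the bound on ϑ, for every Lipschitz v vanishing on ∂F
    (L_E : ℝ) (hL_E : 0 ≤ L_E)
    (hA2 : ∀ v : ℝ → EuclideanSpace ℝ (Fin n) → EuclideanSpace ℝ (Fin m),
      (∃ K : NNReal, LipschitzOnWith K (Function.uncurry v) (Icc (0:ℝ) T ×ˢ closure F)) →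
      (∀ t ∈ Icc (0:ℝ) T, ∀ x ∈ frontier F, v t x = 0) →
      ∀ lam : ℝ, 0 ≤ lam → ∀ t ∈ Icc (0:ℝ) T, ∀ x ∈ closure F,
        Real.exp (-lam * t) * ‖ϑ v t x‖ ≤
          L_E * sSup ((fun p : ℝ × EuclideanSpace ℝ (Fin n) =>
            Real.exp (-lam * p.1) * ‖v p.1 p.2‖) '' (Icc (0:ℝ) T ×ˢ closure F)))
    -- (A3)
    (c₁ c₂ c₃ : ℝ) (hc₁ : 0 ≤ c₁) (hc₂ : 0 ≤ c₂) (hc₃ : 0 ≤ c₃)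
    (ζ : ℝ → EuclideanSpace ℝ (Fin n) → EuclideanSpace ℝ (Fin m) →
      (EuclideanSpace ℝ (Fin n) →L[ℝ] EuclideanSpace ℝ (Fin m)) → E →
      EuclideanSpace ℝ (Fin n) → ℝ)
    (hζnonneg : ∀ t x v p w q, 0 ≤ ζ t x v p w q)
    (hζzero : ∀ t x v p w, ζ t x v p w 0 = 0)
    (hA3 : ∀ t ∈ Icc (0:ℝ) T, ∀ x ∈ closure F,
      ∀ (v : EuclideanSpace ℝ (Fin m))
        (p : EuclideanSpace ℝ (Fin n) →L[ℝ] EuclideanSpace ℝ (Fin m)) (w : E),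
      ⟪a t x v p w, v⟫ ≥
        -c₁ - c₂ * ‖v‖ ^ 2 - c₃ * ‖w‖ ^ 2 -
          ζ t x v p w (ContinuousLinearMap.adjoint p v))
    -- (A4): φ₀ ∈ C^{2+β}(F̄)
    (β : ℝ) (hβ : β ∈ Ioo (0:ℝ) 1)
    (Dφ₀ : EuclideanSpace ℝ (Fin n) →
      (EuclideanSpace ℝ (Fin n) →L[ℝ] EuclideanSpace ℝ (Fin m)))
    (D2φ₀ : EuclideanSpace ℝ (Fin n) →
      (EuclideanSpace ℝ (Fin n) →L[ℝ]
        EuclideanSpace ℝ (Fin n) →L[ℝ] EuclideanSpace ℝ (Fin m)))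
    (hφ₀d1 : ∀ x ∈ closure F, HasFDerivWithinAt φ₀ (Dφ₀ x) (closure F) x)
    (hφ₀d2 : ∀ x ∈ closure F, HasFDerivWithinAt Dφ₀ (D2φ₀ x) (closure F) x)
    (hφ₀c : ContinuousOn φ₀ (closure F))
    (hφ₀c1 : ContinuousOn Dφ₀ (closure F))
    (hφ₀c2 : ContinuousOn D2φ₀ (closure F))
    (hφ₀Hol : ∃ C : ℝ, 0 ≤ C ∧ ∀ x ∈ closure F, ∀ y ∈ closure F,
      dist x y < 1 → ‖D2φ₀ x - D2φ₀ y‖ ≤ C * dist x y ^ β)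
    -- the C^{1,2}(F̄_T) solution u, with its derivatives ut, ux, uxx
    (u ut : ℝ → EuclideanSpace ℝ (Fin n) → EuclideanSpace ℝ (Fin m))
    (ux : ℝ → EuclideanSpace ℝ (Fin n) →
      (EuclideanSpace ℝ (Fin n) →L[ℝ] EuclideanSpace ℝ (Fin m)))
    (uxx : ℝ → EuclideanSpace ℝ (Fin n) →
      (EuclideanSpace ℝ (Fin n) →L[ℝ]
        EuclideanSpace ℝ (Fin n) →L[ℝ] EuclideanSpace ℝ (Fin m)))
    (hut : ∀ t ∈ Icc (0:ℝ) T, ∀ x ∈ closure F,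
      HasDerivWithinAt (fun s => u s x) (ut t x) (Icc (0:ℝ) T) t)
    (hux : ∀ t ∈ Icc (0:ℝ) T, ∀ x ∈ closure F,
      HasFDerivWithinAt (u t) (ux t x) (closure F) x)
    (huxx : ∀ t ∈ Icc (0:ℝ) T, ∀ x ∈ closure F,
      HasFDerivWithinAt (ux t) (uxx t x) (closure F) x)
    (hucont : ContinuousOn (Function.uncurry u) (Icc (0:ℝ) T ×ˢ closure F))
    (hutcont : ContinuousOn (Function.uncurry ut) (Icc (0:ℝ) T ×ˢ closure F))
    (huxcont : ContinuousOn (Function.uncurry ux) (Icc (0:ℝ) T ×ˢ closure F))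
    (huxxcont : ContinuousOn (Function.uncurry uxx) (Icc (0:ℝ) T ×ˢ closure F))
    -- u solves (P) pointwise on F̄_T
    (hPDE : ∀ t ∈ Icc (0:ℝ) T, ∀ x ∈ closure F,
      -(∑ i, ∑ j, aij i j t x (u t x) •
          uxx t x (EuclideanSpace.single i (1:ℝ)) (EuclideanSpace.single j (1:ℝ))) +
        (∑ i, ai i t x (u t x) (ux t x) (ϑ u t x) •
          ux t x (EuclideanSpace.single i (1:ℝ))) +
        a t x (u t x) (ux t x) (ϑ u t x) + ut t x = 0)
    -- (IB)
    (hinit : ∀ x ∈ closure F, u 0 x = φ₀ x)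
    (hbdry : ∀ t ∈ Icc (0:ℝ) T, ∀ x ∈ frontier F, u t x = 0) :
    ∀ t ∈ Icc (0:ℝ) T, ∀ x ∈ closure F,
      ‖u t x‖ ≤ Real.exp ((c₂ + c₃ * L_E ^ 2 + 1) * T) *
        max (sSup ((fun y => ‖φ₀ y‖) '' closure F)) (Real.sqrt c₁) :=
  stmt_2_general n m T hT F hFopen hFbdd hFne E aij ai a hsymm ϑ φ₀ μ μhat hμhatpos hA1 L_E hA2 c₁
    c₂ c₃ hc₂ hc₃ ζ hζzero hA3 hφ₀c u ut ux uxx hut hux huxx hucont hutcont huxcont hPDE hinit hbdry
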